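/- Let k ≥ 3 and let G = (V,E) be a finite simple graph such that every vertex subset S ⊆ V with |S| < 500 induces at most |S| edges. Let S₁, T ⊆ V be disjoint sets with |S₁| ≥ 2 and |T| ≤ k − 1, and suppose every vertex of S₁ has at least k neighbours inside S₁ ∪ T. Then |S₁ ∪ T| ≥ 2k − 1, and consequently |S₁| ≥ k > |T|. -/

import Mathlib

variable {V : Type*} [Fintype V] [DecidableEq V]

/-- The number of edges of `G` with both endpoints in `S`, i.e. the number of
edges of the induced subgraph `G[S]`. -/
def indE (G : SimpleGraph V) [DecidableRel G.Adj] (S : Finset V) : ℕ :=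
  (Finset.univ.filter (fun e : Sym2 V => e ∈ G.edgeSet ∧ ∀ v, v ∈ e → v ∈ S)).card

lemma sub_indE (G : SimpleGraph V) [DecidableRel G.Adj] (S : Finset V)
    (F : Finset (Sym2 V)) (hF : ∀ e ∈ F, e ∈ G.edgeSet ∧ ∀ v, v ∈ e → v ∈ S) :
    F.card ≤ indE G S :=
  Finset.card_le_card (fun e he => Finset.mem_filter.mpr ⟨Finset.mem_univ e, hF e he⟩)

lemma common_adj (G : SimpleGraph V) [DecidableRel G.Adj]
    (hsparse : ∀ S : Finset V, S.card < 500 → indE G S ≤ S.card)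
    {u v : V} (hadj : G.Adj u v) :
    (G.neighborFinset u ∩ G.neighborFinset v).card ≤ 1 := by
  by_contra h
  push_neg at h
  obtain ⟨c, hc, d, hd, hcd⟩ := Finset.one_lt_card.mp h
  simp only [Finset.mem_inter, SimpleGraph.mem_neighborFinset] at hc hd
  have huv := hadj.ne
  have hcu : u ≠ c := hc.1.ne
  have hcv : v ≠ c := hc.2.ne
  have hdu : u ≠ d := hd.1.ne
  have hdv : v ≠ d := hd.2.ne
  set S : Finset V := {u, v, c, d} with hS
  have hScard : S.card = 4 := by
    rw [hS]
    rw [Finset.card_insert_of_notMem (by simp [huv, hcu, hdu]),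
      Finset.card_insert_of_notMem (by simp [hcv, hdv]),
      Finset.card_insert_of_notMem (by simp [hcd]), Finset.card_singleton]
  set F : Finset (Sym2 V) := {s(u,v), s(u,c), s(u,d), s(v,c), s(v,d)} with hFdef
  have hFcard : F.card = 5 := by
    rw [hFdef]
    rw [Finset.card_insert_of_notMem (by simp [Sym2.eq_iff]; tauto),
      Finset.card_insert_of_notMem (by simp [Sym2.eq_iff]; tauto),
      Finset.card_insert_of_notMem (by simp [Sym2.eq_iff]; tauto),
      Finset.card_insert_of_notMem (by simp [Sym2.eq_iff]; tauto),
      Finset.card_singleton]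
  have hle : F.card ≤ indE G S := by
    apply sub_indE
    intro e he
    rw [hFdef] at he
    simp only [Finset.mem_insert, Finset.mem_singleton] at he
    rcases he with rfl | rfl | rfl | rfl | rfl <;>
      refine ⟨by simp [SimpleGraph.mem_edgeSet, hadj, hc.1, hc.2, hd.1, hd.2], ?_⟩ <;>
      · intro w hw
        rw [Sym2.mem_iff] at hw
        rcases hw with rfl | rfl <;> simp [hS]
  have := hsparse S (by omega)
  omega

lemma common_ne (G : SimpleGraph V) [DecidableRel G.Adj]
    (hsparse : ∀ S : Finset V, S.card < 500 → indE G S ≤ S.card)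
    {u v : V} (huv : u ≠ v) :
    (G.neighborFinset u ∩ G.neighborFinset v).card ≤ 2 := by
  by_contra h
  push_neg at h
  obtain ⟨c, hc, d, hd, e, he, hcd, hce, hde⟩ := Finset.two_lt_card.mp h
  simp only [Finset.mem_inter, SimpleGraph.mem_neighborFinset] at hc hd he
  have hcu : u ≠ c := hc.1.ne
  have hcv : v ≠ c := hc.2.ne
  have hdu : u ≠ d := hd.1.ne
  have hdv : v ≠ d := hd.2.ne
  have heu : u ≠ e := he.1.ne
  have hev : v ≠ e := he.2.ne
  set S : Finset V := {u, v, c, d, e} with hS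
  have hScard : S.card = 5 := by
    rw [hS]
    rw [Finset.card_insert_of_notMem (by simp [huv, hcu, hdu, heu]),
      Finset.card_insert_of_notMem (by simp [hcv, hdv, hev]),
      Finset.card_insert_of_notMem (by simp [hcd, hce]),
      Finset.card_insert_of_notMem (by simp [hde]), Finset.card_singleton]
  set F : Finset (Sym2 V) := {s(u,c), s(u,d), s(u,e), s(v,c), s(v,d), s(v,e)} with hFdef
  have hFcard : F.card = 6 := by
    rw [hFdef]
    rw [Finset.card_insert_of_notMem (by simp [Sym2.eq_iff]; tauto),
      Finset.card_insert_of_notMem (by simp [Sym2.eq_iff]; tauto),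
      Finset.card_insert_of_notMem (by simp [Sym2.eq_iff]; tauto),
      Finset.card_insert_of_notMem (by simp [Sym2.eq_iff]; tauto),
      Finset.card_insert_of_notMem (by simp [Sym2.eq_iff]; tauto),
      Finset.card_singleton]
  have hle : F.card ≤ indE G S := by
    apply sub_indE
    intro x hx
    rw [hFdef] at hx
    simp only [Finset.mem_insert, Finset.mem_singleton] at hx
    rcases hx with rfl | rfl | rfl | rfl | rfl | rfl <;>
      refine ⟨by simp [SimpleGraph.mem_edgeSet, hc.1, hc.2, hd.1, hd.2, he.1, he.2], ?_⟩ <;>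
      · intro w hw
        rw [Sym2.mem_iff] at hw
        rcases hw with rfl | rfl <;> simp [hS]
  have := hsparse S (by omega)
  omega

theorem stmt_6 (k : ℕ) (hk : 3 ≤ k) (G : SimpleGraph V) [DecidableRel G.Adj]
    (hsparse : ∀ S : Finset V, S.card < 500 → indE G S ≤ S.card)
    (S₁ T : Finset V) (hdisj : Disjoint S₁ T)
    (hS₁ : 2 ≤ S₁.card) (hT : T.card ≤ k - 1)
    (hdeg : ∀ v ∈ S₁, k ≤ ((G.neighborFinset v) ∩ (S₁ ∪ T)).card) :
    2 * k - 1 ≤ (S₁ ∪ T).card ∧ k ≤ S₁.card ∧ T.card < k := by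
  obtain ⟨u, hu, v, hv, huv⟩ := Finset.one_lt_card.mp hS₁
  set U := S₁ ∪ T with hU
  set A := G.neighborFinset u ∩ U with hA
  set B := G.neighborFinset v ∩ U with hB
  have hAk : k ≤ A.card := hdeg u hu
  have hBk : k ≤ B.card := hdeg v hv
  have hsum : (A ∪ B).card + (A ∩ B).card = A.card + B.card :=
    Finset.card_union_add_card_inter A B
  have hABsub : A ∩ B ⊆ G.neighborFinset u ∩ G.neighborFinset v := by
    intro x hx
    simp only [hA, hB, Finset.mem_inter] at hx ⊢
    exact ⟨hx.1.1, hx.2.1⟩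
  have hUcard : 2 * k - 1 ≤ U.card := by
    by_cases hadj : G.Adj u v
    · have h1 : (A ∩ B).card ≤ 1 :=
        le_trans (Finset.card_le_card hABsub) (common_adj G hsparse hadj)
      have h2 : (A ∪ B).card ≤ U.card := by
        apply Finset.card_le_card
        exact Finset.union_subset Finset.inter_subset_right Finset.inter_subset_right
      omega
    · have h1 : (A ∩ B).card ≤ 2 :=
        le_trans (Finset.card_le_card hABsub) (common_ne G hsparse huv)
      have h2 : (A ∪ B).card ≤ U.card - 1 := by
        have hsub : A ∪ B ⊆ U.erase u := by
          intro x hx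
          rw [Finset.mem_erase]
          simp only [hA, hB, Finset.mem_union, Finset.mem_inter,
            SimpleGraph.mem_neighborFinset] at hx
          constructor
          · rintro rfl
            rcases hx with hx | hx
            · exact G.loopless.irrefl x hx.1
            · exact hadj (hx.1.symm)
          · rcases hx with hx | hx <;> exact hx.2
        calc (A ∪ B).card ≤ (U.erase u).card := Finset.card_le_card hsub
          _ = U.card - 1 := Finset.card_erase_of_mem (Finset.mem_union_left T hu)
      have huU : u ∈ U := Finset.mem_union_left T hu
      have : 1 ≤ U.card := Finset.card_pos.mpr ⟨u, huU⟩
      omega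
  have hcardU : U.card = S₁.card + T.card := Finset.card_union_of_disjoint hdisj
  refine ⟨hUcard, by omega, by omega⟩
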